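/- arXiv:2111.03509 — 4 statements merged into one kernel-verified Lean document; each statement's English description precedes it below -/
import Mathlib

section
/- Let X be a Banach space and Ψ : X → [0,∞] a convex function. Then Ψ is coercive (i.e., ‖vₖ‖ → ∞ implies Ψ(vₖ) → ∞ for every sequence (vₖ)) if and only if there exist constants C > 0 and D ∈ ℝ such that ‖v‖ ≤ C·Ψ(v) + D for all v ∈ X. -/
open ENNReal Filter Bornology Metric Topology

/-! Coercivity says that `Ψ → ∞` along the cobounded filter. Fix `x₀` with `Ψ x₀ < ∞` and `r > 0`
with `Ψ ≥ Ψ x₀ + 1` outside the ball of radius `r` about `x₀`. For `v` farther out, the point of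
the segment `[x₀, v]` at distance `r` from `x₀` is `x₀ + t • (v - x₀)` with `t = r / ‖v - x₀‖`, so
convexity gives `1 ≤ t Ψ v`, that is `‖v - x₀‖ ≤ r Ψ v`. -/

theorem tendsto_cobounded_of_forall_seq {E α : Type*} [SeminormedAddCommGroup E] {f : E → α}
    {l : Filter α} (h : ∀ v : ℕ → E, Tendsto (‖v ·‖) atTop atTop → Tendsto (f ∘ v) atTop l) :
    Tendsto f (cobounded E) l := by
  rw [← comap_norm_atTop]
  exact tendsto_iff_seq_tendsto.2 fun v hv ↦ h v (tendsto_comap_iff.1 hv)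

theorem ENNReal.tendsto_nhds_top_of_le_mul_add {ι : Type*} {l : Filter ι} {f g : ι → ℝ≥0∞}
    {a b : ℝ≥0∞} (ha : a ≠ ∞) (hb : b ≠ ∞) (hg : Tendsto g l (𝓝 ∞))
    (hle : ∀ i, g i ≤ a * f i + b) : Tendsto f l (𝓝 ∞) := by
  refine tendsto_nhds_top_iff_nat.2 fun n ↦ ?_
  have hfin : a * n + b < ∞ := by finiteness
  filter_upwards [hg.eventually (lt_mem_nhds hfin)] with i hi
  exact lt_of_mul_lt_mul_left ((ENNReal.add_lt_add_iff_right hb).1 (hi.trans_le (hle i))) bot_le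

section Convex

variable {E : Type*} [SeminormedAddCommGroup E] [NormedSpace ℝ E]

theorem le_ofReal_mul_add_of_convex {Ψ : E → ℝ≥0∞}
    (hconv : ∀ x y : E, ∀ t : ℝ, 0 ≤ t → t ≤ 1 →
      Ψ (t • x + (1 - t) • y) ≤ ENNReal.ofReal t * Ψ x + ENNReal.ofReal (1 - t) * Ψ y)
    (x₀ v : E) {t : ℝ} (ht₀ : 0 ≤ t) (ht₁ : t ≤ 1) :
    Ψ (x₀ + t • (v - x₀)) ≤ ENNReal.ofReal t * Ψ v + Ψ x₀ := by
  have hseg : x₀ + t • (v - x₀) = t • v + (1 - t) • x₀ := by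
    rw [smul_sub, sub_smul, one_smul]; abel
  calc Ψ (x₀ + t • (v - x₀)) ≤ ENNReal.ofReal t * Ψ v + ENNReal.ofReal (1 - t) * Ψ x₀ :=
        hseg ▸ hconv v x₀ t ht₀ ht₁
    _ ≤ ENNReal.ofReal t * Ψ v + Ψ x₀ := by
        gcongr
        exact mul_le_of_le_one_left' (ENNReal.ofReal_le_one.2 (by linarith))

theorem ofReal_norm_sub_le_of_convex {Ψ : E → ℝ≥0∞}
    (hconv : ∀ x y : E, ∀ t : ℝ, 0 ≤ t → t ≤ 1 →
      Ψ (t • x + (1 - t) • y) ≤ ENNReal.ofReal t * Ψ x + ENNReal.ofReal (1 - t) * Ψ y)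
    {x₀ : E} (hx₀ : Ψ x₀ ≠ ∞) {r : ℝ} (hr : 0 < r)
    (hgrowth : ∀ w, r ≤ ‖w - x₀‖ → Ψ x₀ + 1 ≤ Ψ w) (v : E) :
    ENNReal.ofReal ‖v - x₀‖ ≤ ENNReal.ofReal r * Ψ v + ENNReal.ofReal r := by
  rcases lt_or_ge ‖v - x₀‖ r with hv | hv
  · exact le_add_left (ENNReal.ofReal_le_ofReal hv.le)
  refine le_add_right ?_
  have hd : 0 < ‖v - x₀‖ := hr.trans_le hv
  set t := r / ‖v - x₀‖ with ht
  have ht₀ : 0 ≤ t := by positivity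
  have hw : r ≤ ‖x₀ + t • (v - x₀) - x₀‖ := by
    rw [add_sub_cancel_left, norm_smul, Real.norm_of_nonneg ht₀, ht, div_mul_cancel₀ _ hd.ne']
  have hone : 1 ≤ ENNReal.ofReal t * Ψ v := by
    have := (hgrowth _ hw).trans (le_ofReal_mul_add_of_convex hconv x₀ v ht₀ ((div_le_one hd).2 hv))
    rw [add_comm (Ψ x₀)] at this
    exact (ENNReal.add_le_add_iff_right hx₀).1 this
  calc ENNReal.ofReal ‖v - x₀‖ ≤ ENNReal.ofReal ‖v - x₀‖ * (ENNReal.ofReal t * Ψ v) :=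
        le_mul_of_one_le_right' hone
    _ = ENNReal.ofReal r * Ψ v := by
        rw [← mul_assoc, ← ENNReal.ofReal_mul hd.le, ht, mul_div_cancel₀ _ hd.ne']

end Convex

theorem stmt_1_general {X : Type*} [NormedAddCommGroup X] [NormedSpace ℝ X]
    (Ψ : X → ℝ≥0∞)
    (hconv : ∀ x y : X, ∀ t : ℝ, 0 ≤ t → t ≤ 1 →
      Ψ (t • x + (1 - t) • y) ≤ ENNReal.ofReal t * Ψ x + ENNReal.ofReal (1 - t) * Ψ y) :
    (∀ v : ℕ → X, Tendsto (fun k => ‖v k‖) atTop atTop →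
        Tendsto (fun k => Ψ (v k)) atTop (nhds ⊤)) ↔
    ∃ C : ℝ, 0 < C ∧ ∃ D : ℝ, ∀ v : X,
      ENNReal.ofReal ‖v‖ ≤ ENNReal.ofReal C * Ψ v + ENNReal.ofReal D := by
  refine ⟨fun hcoer ↦ ?_, fun ⟨C, _, D, hCD⟩ v hv ↦ ?_⟩
  · by_cases htop : ∀ x, Ψ x = ∞
    · exact ⟨1, one_pos, 0, fun v ↦ by simp [htop v]⟩
    obtain ⟨x₀, hx₀⟩ := not_forall.1 htop
    have hlim : Tendsto Ψ (cobounded X) (𝓝 ∞) := tendsto_cobounded_of_forall_seq hcoer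
    obtain ⟨R, -, hR⟩ := (hasBasis_cobounded_compl_ball x₀).eventually_iff.1
      (hlim.eventually (lt_mem_nhds (by finiteness : Ψ x₀ + 1 < ∞)))
    set r := max R 1
    have hgrowth (w : X) (hw : r ≤ ‖w - x₀‖) : Ψ x₀ + 1 ≤ Ψ w := by
      refine (hR ?_).le
      rw [Set.mem_compl_iff, mem_ball, not_lt, dist_eq_norm]
      exact (le_max_left R 1).trans hw
    refine ⟨r, by positivity, r + ‖x₀‖, fun v ↦ ?_⟩
    calc ENNReal.ofReal ‖v‖ ≤ ENNReal.ofReal ‖v - x₀‖ + ENNReal.ofReal ‖x₀‖ := by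
          rw [← ENNReal.ofReal_add (norm_nonneg _) (norm_nonneg _)]
          exact ENNReal.ofReal_le_ofReal (norm_le_norm_sub_add v x₀)
      _ ≤ ENNReal.ofReal r * Ψ v + ENNReal.ofReal r + ENNReal.ofReal ‖x₀‖ := by
          gcongr
          exact ofReal_norm_sub_le_of_convex hconv hx₀ (by positivity) hgrowth v
      _ = ENNReal.ofReal r * Ψ v + ENNReal.ofReal (r + ‖x₀‖) := by
          rw [add_assoc, ENNReal.ofReal_add (by positivity) (norm_nonneg _)]
  · exact ENNReal.tendsto_nhds_top_of_le_mul_add ofReal_ne_top ofReal_ne_top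
      (ENNReal.tendsto_ofReal_atTop.comp hv) fun k ↦ hCD (v k)

/-- A convex functional `Ψ : X → [0,∞]` is coercive
(`‖vₖ‖ → ∞ ⟹ Ψ(vₖ) → ∞`) iff there are `C > 0` and `D ∈ ℝ` with
`‖v‖ ≤ C Ψ(v) + D` for all `v`. -/
theorem stmt_1 {X : Type*} [NormedAddCommGroup X] [NormedSpace ℝ X] [CompleteSpace X]
    (Ψ : X → ℝ≥0∞)
    (hconv : ∀ x y : X, ∀ t : ℝ, 0 ≤ t → t ≤ 1 →
      Ψ (t • x + (1 - t) • y) ≤ ENNReal.ofReal t * Ψ x + ENNReal.ofReal (1 - t) * Ψ y) :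
    (∀ v : ℕ → X, Tendsto (fun k => ‖v k‖) atTop atTop →
        Tendsto (fun k => Ψ (v k)) atTop (nhds ⊤)) ↔
    ∃ C : ℝ, 0 < C ∧ ∃ D : ℝ, ∀ v : X,
      ENNReal.ofReal ‖v‖ ≤ ENNReal.ofReal C * Ψ v + ENNReal.ofReal D :=
  stmt_1_general Ψ hconv
end

section
/- Let X be a Banach space, R : X → [0,∞] a functional, L ⊂ X a finite-dimensional subspace, G : X → L a map and C > 0, D ≥ 0 constants with ‖u − G(u)‖ ≤ C·R(u) + D for all u ∈ X. Let K ⊂ X be a closed subspace and P : X → K ∩ L a bounded linear projection onto K ∩ L. Then there exist constants C' > 0 and D' ≥ 0, with D' = 0 in case D = 0, such that ‖u − P u‖ ≤ C'·R(u) + D' for all u ∈ K. -/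
/-!
Fix `q ∈ K ∩ L`. Since `P q = q`, we have `u - P u = (u - q) - P (u - q)`, so
`‖u - P u‖ ≤ (1 + ‖P‖) ‖u - q‖`, and it remains to find `q` close to `u` when `u ∈ K`.
The restriction to `L` of the quotient map `X → X ⧸ K` is a linear map on a finite-dimensional
space with kernel `K ∩ L`; an (automatically bounded) right inverse of it on its range moves
`G u` into `K ∩ L` by at most a constant times `‖G u mod K‖ ≤ ‖u - G u‖`.
Hence `‖u - P u‖ ≤ A ‖u - G u‖` for a constant `A`, and the estimate transfers with
`C' = A C`, `D' = A D`.
-/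

theorem ContinuousLinearMap.norm_sub_apply_le_of_apply_eq {𝕜 E : Type*}
    [NontriviallyNormedField 𝕜]
    [SeminormedAddCommGroup E] [NormedSpace 𝕜 E] (P : E →L[𝕜] E) {q : E} (hq : P q = q)
    (u : E) : ‖u - P u‖ ≤ (1 + ‖P‖) * ‖u - q‖ :=
  calc ‖u - P u‖ = ‖(u - q) - P (u - q)‖ := by rw [map_sub, hq, sub_sub_sub_cancel_right]
    _ ≤ ‖u - q‖ + ‖P‖ * ‖u - q‖ := (norm_sub_le _ _).trans (by gcongr; exact P.le_opNorm _)
    _ = (1 + ‖P‖) * ‖u - q‖ := by ring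

theorem LinearMap.exists_mem_ker_norm_sub_le {𝕜 E F : Type*} [NontriviallyNormedField 𝕜]
    [CompleteSpace 𝕜] [NormedAddCommGroup E] [NormedSpace 𝕜 E] [FiniteDimensional 𝕜 E]
    [NormedAddCommGroup F] [NormedSpace 𝕜 F] (T : E →ₗ[𝕜] F) :
    ∃ c : ℝ, 0 ≤ c ∧ ∀ p, ∃ k ∈ LinearMap.ker T, ‖p - k‖ ≤ c * ‖T p‖ := by
  obtain ⟨S, hS⟩ := T.rangeRestrict.exists_rightInverse_of_surjective T.range_rangeRestrict
  let S' : LinearMap.range T →L[𝕜] E := LinearMap.toContinuousLinearMap S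
  refine ⟨‖S'‖, norm_nonneg _, fun p => ⟨p - S (T.rangeRestrict p), ?_, ?_⟩⟩
  · have h : T (S (T.rangeRestrict p)) = T p :=
      congrArg Subtype.val (LinearMap.congr_fun hS (T.rangeRestrict p))
    rw [LinearMap.mem_ker, map_sub, h, sub_self]
  · rw [sub_sub_cancel]
    exact S'.le_opNorm _

theorem Submodule.exists_mem_inf_norm_sub_le {X : Type*} [NormedAddCommGroup X]
    [NormedSpace ℝ X] (L : Subspace ℝ X) [FiniteDimensional ℝ L] (K : Subspace ℝ X)
    [IsClosed (K : Set X)] :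
    ∃ c : ℝ, 0 ≤ c ∧ ∀ p ∈ L, ∀ u ∈ K, ∃ q ∈ K ⊓ L, ‖p - q‖ ≤ c * ‖u - p‖ := by
  obtain ⟨c, hc, hT⟩ := (K.mkQ.comp L.subtype).exists_mem_ker_norm_sub_le
  refine ⟨c, hc, fun p hp u hu => ?_⟩
  obtain ⟨k, hk, hpk⟩ := hT ⟨p, hp⟩
  have hkK : (k : X) ∈ K := by simpa [Submodule.Quotient.mk_eq_zero] using hk
  refine ⟨k, ⟨hkK, k.2⟩, hpk.trans (mul_le_mul_of_nonneg_left ?_ hc)⟩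
  have hmk : K.mkQ p = K.mkQ (p - u) := by
    have hu0 : K.mkQ u = 0 := by rwa [← LinearMap.mem_ker, Submodule.ker_mkQ]
    rw [map_sub, hu0, sub_zero]
  simpa [hmk, norm_sub_rev] using Submodule.Quotient.norm_mk_le K (p - u)

open ENNReal

theorem stmt_3_general {X : Type*} [NormedAddCommGroup X] [NormedSpace ℝ X]
    (R : X → ℝ≥0∞) (L : Subspace ℝ X) [FiniteDimensional ℝ L]
    (G : X → X) (hG : ∀ u, G u ∈ L)
    (C D : ℝ) (hC : 0 < C) (hD : 0 ≤ D)
    (hest : ∀ u : X, ENNReal.ofReal ‖u - G u‖ ≤ ENNReal.ofReal C * R u + ENNReal.ofReal D)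
    (K : Subspace ℝ X) (hK : IsClosed (K : Set X))
    (P : X →L[ℝ] X) (hPproj : ∀ x ∈ K ⊓ L, P x = x) :
    ∃ C' D' : ℝ, 0 < C' ∧ 0 ≤ D' ∧ (D = 0 → D' = 0) ∧
      ∀ u ∈ K, ENNReal.ofReal ‖u - P u‖ ≤ ENNReal.ofReal C' * R u + ENNReal.ofReal D' := by
  have : IsClosed (K : Set X) := hK
  obtain ⟨c, hc, hnear⟩ := L.exists_mem_inf_norm_sub_le K
  set A := (1 + ‖P‖) * (1 + c)
  have hA : 0 < A := by positivity
  have hPu : ∀ u ∈ K, ‖u - P u‖ ≤ A * ‖u - G u‖ := fun u hu => by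
    obtain ⟨q, hq, hGq⟩ := hnear (G u) (hG u) u hu
    calc ‖u - P u‖ ≤ (1 + ‖P‖) * ‖u - q‖ := P.norm_sub_apply_le_of_apply_eq (hPproj q hq) u
      _ ≤ (1 + ‖P‖) * (‖u - G u‖ + c * ‖u - G u‖) := by
        gcongr
        exact (norm_sub_le_norm_sub_add_norm_sub u (G u) q).trans (by gcongr)
      _ = A * ‖u - G u‖ := by ring
  refine ⟨A * C, A * D, by positivity, by positivity, fun h => by rw [h, mul_zero], fun u hu => ?_⟩
  calc ENNReal.ofReal ‖u - P u‖ ≤ ENNReal.ofReal A * ENNReal.ofReal ‖u - G u‖ := by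
        rw [← ENNReal.ofReal_mul hA.le]
        exact ENNReal.ofReal_le_ofReal (hPu u hu)
    _ ≤ ENNReal.ofReal A * (ENNReal.ofReal C * R u + ENNReal.ofReal D) := by gcongr; exact hest u
    _ = ENNReal.ofReal (A * C) * R u + ENNReal.ofReal (A * D) := by
        rw [mul_add, ← mul_assoc, ← ENNReal.ofReal_mul hA.le, ← ENNReal.ofReal_mul hA.le]

/-- projection transfer, Lemma 4.1. Given `‖u − G u‖ ≤ C R(u) + D`
with `G : X → L`, `L` finite dimensional, `K ⊂ X` a closed subspace and
`P` a bounded linear projection onto `K ∩ L`, there are `C' > 0`, `D' ≥ 0`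
(`D' = 0` if `D = 0`) with `‖u − P u‖ ≤ C' R(u) + D'` for all `u ∈ K`. -/
theorem stmt_3 {X : Type*} [NormedAddCommGroup X] [NormedSpace ℝ X] [CompleteSpace X]
    (R : X → ℝ≥0∞) (L : Subspace ℝ X) [FiniteDimensional ℝ L]
    (G : X → X) (hG : ∀ u, G u ∈ L)
    (C D : ℝ) (hC : 0 < C) (hD : 0 ≤ D)
    (hest : ∀ u : X, ENNReal.ofReal ‖u - G u‖ ≤ ENNReal.ofReal C * R u + ENNReal.ofReal D)
    (K : Subspace ℝ X) (hK : IsClosed (K : Set X))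
    (P : X →L[ℝ] X) (hPKL : ∀ x, P x ∈ K ⊓ L) (hPproj : ∀ x ∈ K ⊓ L, P x = x) :
    ∃ C' D' : ℝ, 0 < C' ∧ 0 ≤ D' ∧ (D = 0 → D' = 0) ∧
      ∀ u ∈ K, ENNReal.ofReal ‖u - P u‖ ≤ ENNReal.ofReal C' * R u + ENNReal.ofReal D' :=
  stmt_3_general R L G hG C D hC hD hest K hK P hPproj
end

section
/- Let X be a reflexive Banach space and X₀ ⊂ X a Banach space with continuous embedding X₀ ↪ X such that X₀ is reflexive. Let R : X₀ → [0,∞] be convex, weakly lower semicontinuous on X₀, invariant on a finite-dimensional subspace L ⊂ X₀, and satisfy ‖u − P_L u‖_{X₀} ≤ C R(u) + D for a bounded linear projection P_L : X₀ → L. Extend R to X by R(x) = ∞ for x ∈ X \ X₀. Then the extension is convex and lower semicontinuous with respect to weak convergence in X. -/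
open Filter Topology ENNReal

/-- Weak sequential convergence of a sequence in a normed space. -/
def WeakSeqConv {X : Type*} [NormedAddCommGroup X] [NormedSpace ℝ X]
    (u : ℕ → X) (x : X) : Prop :=
  ∀ f : StrongDual ℝ X, Tendsto (fun k => f (u k)) atTop (𝓝 (f x))

/-!
Convexity passes to the extension by `∞` because `ι` is linear and injective. For weak lower
semicontinuity, pass to a subsequence along which `Rext (x k)` tends to the liminf `A < ∞`. The
preimages `u k ∈ X₀` then have bounded `R`, so by coercivity `u k - PL (u k)` is bounded in `X₀`
and, by reflexivity, converges weakly along a further subsequence to some `w`. The remainders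
`ι (PL (u k))` converge weakly in the finite-dimensional space `ι L`, so their limit stays there:
the weak limit of `x k` is `ι (w + l)` with `l ∈ L`, and `R (w + l) = R w ≤ A` by invariance and
weak lower semicontinuity of `R` on `X₀`.
-/

def ConvexENNReal {E : Type*} [AddCommGroup E] [Module ℝ E] (f : E → ℝ≥0∞) : Prop :=
  ∀ x y : E, ∀ t : ℝ, 0 ≤ t → t ≤ 1 →
    f (t • x + (1 - t) • y) ≤ ENNReal.ofReal t * f x + ENNReal.ofReal (1 - t) * f y

def BoundedSeqHasWeakSubseq (X : Type*) [NormedAddCommGroup X] [NormedSpace ℝ X] : Prop :=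
  ∀ u : ℕ → X, (∃ M : ℝ, ∀ k, ‖u k‖ ≤ M) →
    ∃ (φ : ℕ → ℕ) (x : X), StrictMono φ ∧ WeakSeqConv (u ∘ φ) x

def WeakSeqLowerSemicontinuous {X : Type*} [NormedAddCommGroup X] [NormedSpace ℝ X]
    (f : X → ℝ≥0∞) : Prop :=
  ∀ (u : ℕ → X) (ulim : X), WeakSeqConv u ulim → f ulim ≤ liminf (fun k => f (u k)) atTop

namespace WeakSeqConv

variable {X Y : Type*} [NormedAddCommGroup X] [NormedSpace ℝ X]
  [NormedAddCommGroup Y] [NormedSpace ℝ Y] {x y : ℕ → X} {a b : X}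

theorem comp_strictMono (h : WeakSeqConv x a) {φ : ℕ → ℕ} (hφ : StrictMono φ) :
    WeakSeqConv (fun k => x (φ k)) a :=
  fun f => (h f).comp hφ.tendsto_atTop

theorem of_tendsto (h : Tendsto x atTop (𝓝 a)) : WeakSeqConv x a :=
  fun f => (f.continuous.tendsto a).comp h

theorem map (f : X →L[ℝ] Y) (h : WeakSeqConv x a) : WeakSeqConv (fun k => f (x k)) (f a) :=
  fun g => h (g.comp f)

theorem sub (hx : WeakSeqConv x a) (hy : WeakSeqConv y b) :
    WeakSeqConv (fun k => x k - y k) (a - b) :=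
  fun f => by simpa only [map_sub] using (hx f).sub (hy f)

theorem unique (ha : WeakSeqConv x a) (hb : WeakSeqConv x b) : a = b :=
  SeparatingDual.eq_iff_forall_dual_eq.2 fun f => tendsto_nhds_unique (ha f) (hb f)

/-- Banach–Steinhaus, applied to `x k` viewed in the bidual. -/
theorem exists_norm_le (h : WeakSeqConv x a) : ∃ M : ℝ, ∀ k, ‖x k‖ ≤ M := by
  let g : ℕ → StrongDual ℝ (StrongDual ℝ X) := fun k => NormedSpace.inclusionInDoubleDual ℝ X (x k)
  have hg : ∀ f : StrongDual ℝ X, ∃ C, ∀ k, ‖g k f‖ ≤ C := fun f => by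
    obtain ⟨C, hC⟩ := (h f).norm.bddAbove_range
    exact ⟨C, fun k => hC ⟨k, rfl⟩⟩
  obtain ⟨M, hM⟩ := banach_steinhaus hg
  exact ⟨M, fun k => (NormedSpace.inclusionInDoubleDualLi ℝ).norm_map (x k) ▸ hM k⟩

theorem mem_of_finiteDimensional {S : Submodule ℝ X} [FiniteDimensional ℝ S]
    (h : WeakSeqConv x a) (hx : ∀ k, x k ∈ S) : a ∈ S := by
  obtain ⟨M, hM⟩ := h.exists_norm_le
  obtain ⟨b, -, φ, hφ, hb⟩ :=
    tendsto_subseq_of_bounded (Metric.isBounded_closedBall (x := 0) (r := M))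
      (x := fun k => (⟨x k, hx k⟩ : S)) fun k => by simpa using hM k
  have hba : (b : X) = a :=
    (of_tendsto ((continuous_subtype_val.tendsto b).comp hb)).unique (h.comp_strictMono hφ)
  exact hba ▸ b.2

end WeakSeqConv

theorem iInf_eq_extend_top {α β : Type*} {ι : α → β} (hι : Function.Injective ι)
    (R : α → ℝ≥0∞) (x : β) : ⨅ (u) (_ : ι u = x), R u = Function.extend ι R ⊤ x := by
  by_cases hx : ∃ u, ι u = x
  · obtain ⟨u, rfl⟩ := hx
    rw [hι.extend_apply]
    exact le_antisymm (iInf_le_of_le u (iInf_le _ rfl)) (le_iInf₂ fun v hv => (hι hv).symm ▸ le_rfl)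
  · rw [Function.extend_apply' _ _ _ hx]
    exact iInf₂_eq_top.2 fun u hu => (hx ⟨u, hu⟩).elim

theorem ConvexENNReal.extend_top {E F G : Type*} [AddCommGroup E] [Module ℝ E]
    [AddCommGroup F] [Module ℝ F] [FunLike G E F] [LinearMapClass G ℝ E F] {ι : G}
    (hι : Function.Injective ι) {R : E → ℝ≥0∞} (hR : ConvexENNReal R) :
    ConvexENNReal (Function.extend ι R ⊤) := by
  intro x y t ht0 ht1
  rcases ht0.eq_or_lt with rfl | ht0
  · simp
  rcases ht1.eq_or_lt with rfl | ht1
  · simp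
  by_cases hx : ∃ u, ι u = x
  swap
  · rw [Function.extend_apply' _ _ _ hx, Pi.top_apply, ENNReal.mul_top (by simpa using ht0),
      top_add]
    exact le_top
  by_cases hy : ∃ v, ι v = y
  swap
  · rw [Function.extend_apply' _ _ _ hy, Pi.top_apply, ENNReal.mul_top (by simpa using ht1),
      add_top]
    exact le_top
  obtain ⟨u, rfl⟩ := hx
  obtain ⟨v, rfl⟩ := hy
  rw [← map_smul, ← map_smul, ← map_add, hι.extend_apply, hι.extend_apply, hι.extend_apply]
  exact hR u v t ht0.le ht1.le

section Extension

variable {X₀ X : Type*} [NormedAddCommGroup X₀] [NormedSpace ℝ X₀]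
  [NormedAddCommGroup X] [NormedSpace ℝ X] {ι : X₀ →L[ℝ] X}
  {L : Subspace ℝ X₀} [FiniteDimensional ℝ L] {PL : X₀ →L[ℝ] X₀} {R : X₀ → ℝ≥0∞} {C D : ℝ}

theorem exists_weakSeqConv_sub_proj_of_bounded
    (hrefl : BoundedSeqHasWeakSubseq X₀)
    (hPL : ∀ x, PL x ∈ L) {u : ℕ → X₀} {M : ℝ} (hM : ∀ k, ‖u k - PL (u k)‖ ≤ M)
    {x : X} (hx : WeakSeqConv (fun k => ι (u k)) x) :
    ∃ ψ : ℕ → ℕ, ∃ w : X₀, StrictMono ψ ∧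
      WeakSeqConv (fun k => u (ψ k) - PL (u (ψ k))) w ∧ ∃ l ∈ L, ι (w + l) = x := by
  obtain ⟨ψ, w, hψ, hw⟩ := hrefl _ ⟨M, hM⟩
  have hproj : WeakSeqConv (fun k => ι (PL (u (ψ k)))) (x - ι w) := by
    convert (hx.comp_strictMono hψ).sub (hw.map ι) using 1
    ext k
    simp
  obtain ⟨l, hl, hlx⟩ : x - ι w ∈ L.map (ι : X₀ →ₗ[ℝ] X) :=
    hproj.mem_of_finiteDimensional fun k => Submodule.mem_map_of_mem (hPL _)
  refine ⟨ψ, w, hψ, hw, l, hl, ?_⟩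
  rw [map_add, show ι l = x - ι w from hlx]
  abel

theorem exists_le_of_weakSeqConv_of_tendsto
    (hrefl : BoundedSeqHasWeakSubseq X₀)
    (hRlsc : WeakSeqLowerSemicontinuous R) (hRinv : ∀ u : X₀, ∀ v ∈ L, R (u + v) = R u)
    (hPL : ∀ x, PL x ∈ L)
    (hcoerc : ∀ u : X₀,
      ENNReal.ofReal ‖u - PL u‖ ≤ ENNReal.ofReal C * R u + ENNReal.ofReal D)
    {u : ℕ → X₀} {x : X} (hx : WeakSeqConv (fun k => ι (u k)) x) {A M : ℝ≥0∞} (hM : M ≠ ⊤)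
    (huM : ∀ k, R (u k) ≤ M) (huA : Tendsto (fun k => R (u k)) atTop (𝓝 A)) :
    ∃ w : X₀, ι w = x ∧ R w ≤ A := by
  have hbound : ∀ k, ‖u k - PL (u k)‖ ≤ (ENNReal.ofReal C * M + ENNReal.ofReal D).toReal :=
    fun k => (ENNReal.ofReal_le_iff_le_toReal (by finiteness)).1
      ((hcoerc (u k)).trans (by gcongr; exact huM k))
  obtain ⟨ψ, w, hψ, hw, l, hl, rfl⟩ := exists_weakSeqConv_sub_proj_of_bounded hrefl hPL hbound hx
  have hRsub : ∀ k, R (u k - PL (u k)) = R (u k) := fun k => by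
    rw [sub_eq_add_neg, hRinv _ _ (neg_mem (hPL _))]
  refine ⟨w + l, rfl, ?_⟩
  calc R (w + l) = R w := hRinv w l hl
    _ ≤ liminf (fun k => R (u (ψ k) - PL (u (ψ k)))) atTop := hRlsc _ _ hw
    _ = A := by simpa only [hRsub, Function.comp_def] using (huA.comp hψ.tendsto_atTop).liminf_eq

theorem weakSeqLowerSemicontinuous_extend_top (hι : Function.Injective ι)
    (hrefl : BoundedSeqHasWeakSubseq X₀)
    (hRlsc : WeakSeqLowerSemicontinuous R) (hRinv : ∀ u : X₀, ∀ v ∈ L, R (u + v) = R u)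
    (hPL : ∀ x, PL x ∈ L)
    (hcoerc : ∀ u : X₀,
      ENNReal.ofReal ‖u - PL u‖ ≤ ENNReal.ofReal C * R u + ENNReal.ofReal D) :
    WeakSeqLowerSemicontinuous (Function.extend ι R ⊤) := by
  intro x xlim hx
  set A := liminf (fun k => Function.extend ι R ⊤ (x k)) atTop
  rcases eq_or_ne A ⊤ with hA | hA
  · exact hA ▸ le_top
  obtain ⟨φ, hφ, hφA⟩ :=
    (MapClusterPt.liminf (u := fun k => Function.extend ι R ⊤ (x k)) (f := atTop)).tendsto_subseq
  obtain ⟨N, hN⟩ := eventually_atTop.1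
    (hφA.eventually (gt_mem_nhds (ENNReal.lt_add_right hA one_ne_zero)))
  have hrange : ∀ k, ∃ u, ι u = x (φ (k + N)) := fun k => by
    by_contra hk
    exact ((hN _ le_add_self).trans_le le_top).ne (Function.extend_apply' _ _ _ hk)
  choose u hu using hrange
  have hRu : ∀ k, R (u k) = Function.extend ι R ⊤ (x (φ (k + N))) := fun k => by
    rw [← hu, hι.extend_apply]
  have hφN : StrictMono fun k => φ (k + N) := fun a b hab => hφ (by omega)
  have hux : WeakSeqConv (fun k => ι (u k)) xlim := by
    simpa only [hu] using hx.comp_strictMono hφN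
  have huA : Tendsto (fun k => R (u k)) atTop (𝓝 A) := by
    simp only [hRu]
    exact hφA.comp (tendsto_add_atTop_nat N)
  obtain ⟨w, rfl, hw⟩ := exists_le_of_weakSeqConv_of_tendsto hrefl hRlsc hRinv hPL hcoerc hux
    (by finiteness : A + 1 ≠ ⊤) (fun k => (hRu k).trans_le (hN _ le_add_self).le) huA
  rwa [hι.extend_apply]

end Extension

theorem stmt_10_general {X₀ X : Type*}
    [NormedAddCommGroup X₀] [NormedSpace ℝ X₀]
    [NormedAddCommGroup X] [NormedSpace ℝ X]
    (ι : X₀ →L[ℝ] X) (hι : Function.Injective ι)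
    (hrefl : ∀ u : ℕ → X₀, (∃ M : ℝ, ∀ k, ‖u k‖ ≤ M) →
      ∃ (φ : ℕ → ℕ) (x : X₀), StrictMono φ ∧ WeakSeqConv (u ∘ φ) x)
    (R : X₀ → ℝ≥0∞)
    (hRconv : ∀ x y : X₀, ∀ t : ℝ, 0 ≤ t → t ≤ 1 →
      R (t • x + (1 - t) • y) ≤ ENNReal.ofReal t * R x + ENNReal.ofReal (1 - t) * R y)
    (hRlsc : ∀ (u : ℕ → X₀) (ulim : X₀), WeakSeqConv u ulim →
      R ulim ≤ liminf (fun k => R (u k)) atTop)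
    (L : Subspace ℝ X₀) [FiniteDimensional ℝ L]
    (hRinv : ∀ u : X₀, ∀ v ∈ L, R (u + v) = R u)
    (PL : X₀ →L[ℝ] X₀) (hPLmem : ∀ x, PL x ∈ L)
    (C D : ℝ)
    (hcoerc : ∀ u : X₀,
      ENNReal.ofReal ‖u - PL u‖ ≤ ENNReal.ofReal C * R u + ENNReal.ofReal D)
    (Rext : X → ℝ≥0∞)
    (hRext : ∀ x : X, Rext x = ⨅ (u : X₀) (_ : ι u = x), R u) :
    (∀ x y : X, ∀ t : ℝ, 0 ≤ t → t ≤ 1 →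
      Rext (t • x + (1 - t) • y) ≤
        ENNReal.ofReal t * Rext x + ENNReal.ofReal (1 - t) * Rext y) ∧
    (∀ (x : ℕ → X) (xlim : X), WeakSeqConv x xlim →
      Rext xlim ≤ liminf (fun k => Rext (x k)) atTop) := by
  obtain rfl : Rext = Function.extend ι R ⊤ :=
    funext fun x => (hRext x).trans (iInf_eq_extend_top hι R x)
  exact ⟨ConvexENNReal.extend_top hι hRconv,
    weakSeqLowerSemicontinuous_extend_top hι hrefl hRlsc hRinv hPLmem hcoerc⟩

/-- abstract version of Proposition 4.7. Let `X₀ ↪ X` via a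
continuous injective embedding `ι`, with `X₀` reflexive (encoded as sequential weak
compactness of bounded sequences in `X₀`). If `R : X₀ → [0,∞]` is convex, weakly
sequentially l.s.c. on `X₀`, invariant on a finite-dimensional subspace `L` and
coercive up to `L`, then its extension by `∞` to `X` is convex and sequentially
lower semicontinuous for weak convergence in `X`. -/
theorem stmt_10 {X₀ X : Type*}
    [NormedAddCommGroup X₀] [NormedSpace ℝ X₀] [CompleteSpace X₀]
    [NormedAddCommGroup X] [NormedSpace ℝ X] [CompleteSpace X]
    (ι : X₀ →L[ℝ] X) (hι : Function.Injective ι)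
    (hrefl : ∀ u : ℕ → X₀, (∃ M : ℝ, ∀ k, ‖u k‖ ≤ M) →
      ∃ (φ : ℕ → ℕ) (x : X₀), StrictMono φ ∧ WeakSeqConv (u ∘ φ) x)
    (R : X₀ → ℝ≥0∞)
    (hRconv : ∀ x y : X₀, ∀ t : ℝ, 0 ≤ t → t ≤ 1 →
      R (t • x + (1 - t) • y) ≤ ENNReal.ofReal t * R x + ENNReal.ofReal (1 - t) * R y)
    (hRlsc : ∀ (u : ℕ → X₀) (ulim : X₀), WeakSeqConv u ulim →
      R ulim ≤ liminf (fun k => R (u k)) atTop)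
    (L : Subspace ℝ X₀) [FiniteDimensional ℝ L]
    (hRinv : ∀ u : X₀, ∀ v ∈ L, R (u + v) = R u)
    (PL : X₀ →L[ℝ] X₀) (hPLmem : ∀ x, PL x ∈ L) (hPLproj : ∀ x ∈ L, PL x = x)
    (C D : ℝ) (hC : 0 < C) (hD : 0 ≤ D)
    (hcoerc : ∀ u : X₀,
      ENNReal.ofReal ‖u - PL u‖ ≤ ENNReal.ofReal C * R u + ENNReal.ofReal D)
    (Rext : X → ℝ≥0∞)
    (hRext : ∀ x : X, Rext x = ⨅ (u : X₀) (_ : ι u = x), R u) :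
    (∀ x y : X, ∀ t : ℝ, 0 ≤ t → t ≤ 1 →
      Rext (t • x + (1 - t) • y) ≤
        ENNReal.ofReal t * Rext x + ENNReal.ofReal (1 - t) * Rext y) ∧
    (∀ (x : ℕ → X) (xlim : X), WeakSeqConv x xlim →
      Rext xlim ≤ liminf (fun k => Rext (x k)) atTop) :=
  stmt_10_general ι hι hrefl R hRconv hRlsc L hRinv PL hPLmem C D hcoerc Rext hRext
end

section
/- Let X be a reflexive Banach space, R : X → [0,∞] convex and weakly lower semicontinuous, invariant on a finite-dimensional subspace L with coercivity estimate ‖u − P_L u‖ ≤ C R(u) + D, and let Y be a Banach space, K : X → Y bounded linear, f ∈ Y. Suppose there exists u₀ ∈ X with Ku₀ = f and R(u₀) < ∞. Then the constrained problem min{ R(u) : u ∈ X, Ku = f } admits a minimizer. -/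
/-!
Direct method of the calculus of variations, on the feasible sublevel set
`{u | K u = f ∧ R u ≤ R u₀}`. Along a minimizing sequence `u k`, coercivity bounds
`u k - P_L u k`. The component `P_L u k ∈ L` is controlled only modulo `L ∩ ker K`: since `L`
is finite-dimensional, `K` restricted to `L` is bounded below modulo its kernel, so subtracting
a suitable `a k ∈ L ∩ ker K` leaves a part bounded by `‖K (P_L u k)‖`, hence by `‖f‖` and the
coercivity bound. The shift `a k` changes neither `K u k` nor `R (u k)`. Reflexivity yields a
weakly convergent subsequence; its limit is feasible because `K` is weakly continuous and
minimizing by weak lower semicontinuity of `R`.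
-/

open Filter Topology ENNReal

theorem LinearMap.exists_forall_exists_mem_ker_norm_sub_le {𝕜 E F : Type*}
    [NontriviallyNormedField 𝕜] [CompleteSpace 𝕜]
    [NormedAddCommGroup E] [NormedSpace 𝕜 E] [FiniteDimensional 𝕜 E]
    [NormedAddCommGroup F] [NormedSpace 𝕜 F] (T : E →ₗ[𝕜] F) :
    ∃ c : ℝ, 0 ≤ c ∧ ∀ v : E, ∃ a ∈ LinearMap.ker T, ‖v - a‖ ≤ c * ‖T v‖ := by
  obtain ⟨q, hq⟩ := Submodule.exists_isCompl (LinearMap.ker T)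
  have hker : LinearMap.ker (T ∘ₗ q.subtype) = ⊥ := by
    rw [LinearMap.ker_comp, ← Submodule.disjoint_iff_comap_eq_bot]
    exact hq.disjoint.symm
  obtain ⟨c, -, hc⟩ := (T ∘ₗ q.subtype).exists_antilipschitzWith hker
  refine ⟨c, c.2, fun v => ?_⟩
  obtain ⟨a, b, rfl, -⟩ := Submodule.existsUnique_add_of_isCompl hq v
  refine ⟨a, a.2, ?_⟩
  have hTa : T a = 0 := a.2
  simpa [hTa] using hc.le_mul_dist b 0

section NormedSpace

variable {X Y : Type*} [NormedAddCommGroup X] [NormedSpace ℝ X]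
  [NormedAddCommGroup Y] [NormedSpace ℝ Y]

theorem Submodule.exists_mem_ker_norm_sub_le
    (L : Submodule ℝ X) [FiniteDimensional ℝ L] (PL : X →L[ℝ] X) (hPLmem : ∀ x, PL x ∈ L)
    (K : X →L[ℝ] Y) :
    ∃ c : ℝ, 0 ≤ c ∧ ∀ u : X, ∃ a ∈ L, K a = 0 ∧
      ‖u - a‖ ≤ ‖u - PL u‖ + c * (‖K u‖ + ‖K‖ * ‖u - PL u‖) := by
  obtain ⟨c, hc, hT⟩ :=
    ((K : X →ₗ[ℝ] Y) ∘ₗ L.subtype).exists_forall_exists_mem_ker_norm_sub_le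
  refine ⟨c, hc, fun u => ?_⟩
  obtain ⟨a, ha, hdist⟩ := hT ⟨PL u, hPLmem u⟩
  refine ⟨a, a.2, ha, ?_⟩
  have hKPL : ‖K (PL u)‖ ≤ ‖K u‖ + ‖K‖ * ‖u - PL u‖ := calc
    ‖K (PL u)‖ = ‖K u - K (u - PL u)‖ := by simp
    _ ≤ ‖K u‖ + ‖K (u - PL u)‖ := norm_sub_le _ _
    _ ≤ ‖K u‖ + ‖K‖ * ‖u - PL u‖ := by gcongr; exact K.le_opNorm _
  calc ‖u - a‖ ≤ ‖u - PL u‖ + ‖PL u - a‖ := norm_sub_le_norm_sub_add_norm_sub _ _ _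
    _ ≤ ‖u - PL u‖ + c * ‖K (PL u)‖ := add_le_add le_rfl hdist
    _ ≤ _ := add_le_add le_rfl (mul_le_mul_of_nonneg_left hKPL hc)

theorem exists_norm_sub_le_of_coercive
    (L : Submodule ℝ X) [FiniteDimensional ℝ L] (PL : X →L[ℝ] X) (hPLmem : ∀ x, PL x ∈ L)
    {R : X → ℝ≥0∞} {C D : ℝ}
    (hcoerc : ∀ u : X,
      ENNReal.ofReal ‖u - PL u‖ ≤ ENNReal.ofReal C * R u + ENNReal.ofReal D)
    (K : X →L[ℝ] Y) (f : Y) {M : ℝ≥0∞} (hM : M ≠ ⊤) :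
    ∃ B : ℝ, ∀ u : X, K u = f → R u ≤ M → ∃ a ∈ L, K a = 0 ∧ ‖u - a‖ ≤ B := by
  obtain ⟨c, hc, hshift⟩ := L.exists_mem_ker_norm_sub_le PL hPLmem K
  set B := (ENNReal.ofReal C * M + ENNReal.ofReal D).toReal
  refine ⟨B + c * (‖f‖ + ‖K‖ * B), fun u hKu hRu => ?_⟩
  have hB : ‖u - PL u‖ ≤ B :=
    (ENNReal.ofReal_le_iff_le_toReal (by finiteness)).1 ((hcoerc u).trans (by gcongr))
  obtain ⟨a, haL, hKa, hua⟩ := hshift u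
  refine ⟨a, haL, hKa, hua.trans ?_⟩
  rw [hKu]
  gcongr

theorem WeakSeqConv.map_s13 {u : ℕ → X} {x : X} (h : WeakSeqConv u x) (K : X →L[ℝ] Y) :
    WeakSeqConv (K ∘ u) (K x) :=
  fun g => h (g.comp K)

theorem WeakSeqConv.eq_of_const {y z : X} (h : WeakSeqConv (fun _ => y) z) : z = y :=
  (SeparatingDual.eq_iff_forall_dual_eq (R := ℝ)).2 fun g =>
    tendsto_nhds_unique (h g) tendsto_const_nhds

end NormedSpace

theorem exists_seq_mem_tendsto_iInf {α β : Type*} [CompleteLinearOrder β] [TopologicalSpace β]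
    [OrderTopology β] [FirstCountableTopology β] (R : α → β) {F : Set α} (hF : F.Nonempty) :
    ∃ u : ℕ → α, (∀ k, u k ∈ F) ∧ Tendsto (R ∘ u) atTop (𝓝 (⨅ v ∈ F, R v)) := by
  obtain ⟨r, -, hr, hrF⟩ := exists_seq_tendsto_sInf (hF.image R) (OrderBot.bddBelow _)
  choose u huF hur using hrF
  refine ⟨u, huF, ?_⟩
  rw [← sInf_image]
  convert hr using 1
  exact funext hur

theorem isMinOn_of_isMinOn_sublevel {α β : Type*} [LinearOrder β] {R : α → β} {F : Set α}
    {x x₀ : α} (hx₀ : x₀ ∈ F) (h : IsMinOn R {v ∈ F | R v ≤ R x₀} x) : IsMinOn R F x := by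
  rw [isMinOn_iff] at h ⊢
  intro v hv
  by_cases hvx₀ : R v ≤ R x₀
  · exact h v ⟨hv, hvx₀⟩
  · exact (h x₀ ⟨hx₀, le_rfl⟩).trans (not_le.1 hvx₀).le

theorem stmt_13_general {X Y : Type*}
    [NormedAddCommGroup X] [NormedSpace ℝ X]
    [NormedAddCommGroup Y] [NormedSpace ℝ Y]
    (hrefl : ∀ u : ℕ → X, (∃ M : ℝ, ∀ k, ‖u k‖ ≤ M) →
      ∃ (φ : ℕ → ℕ) (x : X), StrictMono φ ∧ WeakSeqConv (u ∘ φ) x)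
    (R : X → ℝ≥0∞)
    (hRlsc : ∀ (u : ℕ → X) (ulim : X), WeakSeqConv u ulim →
      R ulim ≤ liminf (fun k => R (u k)) atTop)
    (L : Subspace ℝ X) [FiniteDimensional ℝ L]
    (hRinv : ∀ u : X, ∀ v ∈ L, R (u + v) = R u)
    (PL : X →L[ℝ] X) (hPLmem : ∀ x, PL x ∈ L)
    (C D : ℝ)
    (hcoerc : ∀ u : X,
      ENNReal.ofReal ‖u - PL u‖ ≤ ENNReal.ofReal C * R u + ENNReal.ofReal D)
    (K : X →L[ℝ] Y) (f : Y)
    (hattain : ∃ u₀ : X, K u₀ = f ∧ R u₀ < ⊤) :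
    ∃ u : X, K u = f ∧ ∀ v : X, K v = f → R u ≤ R v := by
  obtain ⟨u₀, hKu₀, hRu₀⟩ := hattain
  set F : Set X := {v | K v = f ∧ R v ≤ R u₀}
  obtain ⟨u, huF, hRu⟩ := exists_seq_mem_tendsto_iInf R (F := F) ⟨u₀, hKu₀, le_rfl⟩
  obtain ⟨B, hshift⟩ := exists_norm_sub_le_of_coercive L PL hPLmem hcoerc K f hRu₀.ne
  choose a haL hKa hbdd using fun k => hshift (u k) (huF k).1 (huF k).2
  obtain ⟨φ, x, hφ, hx⟩ := hrefl (fun k => u k - a k) ⟨_, hbdd⟩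
  have hKx : K x = f := by
    have hK := hx.map_s13 K
    simp only [Function.comp_def, map_sub, hKa, (huF _).1, sub_zero] at hK
    exact hK.eq_of_const
  have hRx : R x ≤ ⨅ v ∈ F, R v := by
    have hRa : ∀ k, R (u k - a k) = R (u k) := fun k => by
      simpa using (hRinv (u k - a k) (a k) (haL k)).symm
    calc R x ≤ liminf (fun k => R (u (φ k) - a (φ k))) atTop := hRlsc _ x hx
      _ = ⨅ v ∈ F, R v := by
        simp only [hRa]
        exact (hRu.comp hφ.tendsto_atTop).liminf_eq
  have hmin : IsMinOn R {v | K v = f} x := isMinOn_of_isMinOn_sublevel hKu₀ <|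
    isMinOn_iff.2 fun v hv => hRx.trans (biInf_le _ hv)
  exact ⟨x, hKx, isMinOn_iff.1 hmin⟩

/-- existence of `R`-minimizing solutions. Under the usual
structure on `R` (convex, weakly sequentially l.s.c., invariant and coercive up to a
finite-dimensional subspace `L`) on a reflexive space `X`, if the datum `f` is
attainable with finite `R`-value then `min { R(u) : K u = f }` has a minimizer. -/
theorem stmt_13 {X Y : Type*}
    [NormedAddCommGroup X] [NormedSpace ℝ X] [CompleteSpace X]
    [NormedAddCommGroup Y] [NormedSpace ℝ Y] [CompleteSpace Y]
    (hrefl : ∀ u : ℕ → X, (∃ M : ℝ, ∀ k, ‖u k‖ ≤ M) →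
      ∃ (φ : ℕ → ℕ) (x : X), StrictMono φ ∧ WeakSeqConv (u ∘ φ) x)
    (R : X → ℝ≥0∞)
    (hRconv : ∀ x y : X, ∀ t : ℝ, 0 ≤ t → t ≤ 1 →
      R (t • x + (1 - t) • y) ≤ ENNReal.ofReal t * R x + ENNReal.ofReal (1 - t) * R y)
    (hRlsc : ∀ (u : ℕ → X) (ulim : X), WeakSeqConv u ulim →
      R ulim ≤ liminf (fun k => R (u k)) atTop)
    (L : Subspace ℝ X) [FiniteDimensional ℝ L]
    (hRinv : ∀ u : X, ∀ v ∈ L, R (u + v) = R u)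
    (PL : X →L[ℝ] X) (hPLmem : ∀ x, PL x ∈ L) (hPLproj : ∀ x ∈ L, PL x = x)
    (C D : ℝ) (hC : 0 < C) (hD : 0 ≤ D)
    (hcoerc : ∀ u : X,
      ENNReal.ofReal ‖u - PL u‖ ≤ ENNReal.ofReal C * R u + ENNReal.ofReal D)
    (K : X →L[ℝ] Y) (f : Y)
    (hattain : ∃ u₀ : X, K u₀ = f ∧ R u₀ < ⊤) :
    ∃ u : X, K u = f ∧ ∀ v : X, K v = f → R u ≤ R v :=
  stmt_13_general hrefl R hRlsc L hRinv PL hPLmem C D hcoerc K f hattain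
end
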